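/- Let D be a Dedekind domain and P a maximal ideal of D. Then the set ν(P) = {V(x) : x ∈ P, x ≠ 0} is a maximal product-proper subset of the semigroup 𝒱(D) = ({V(x) : x ∈ D∖{0}}, ∪). -/

import Mathlib

/-- The set of maximal ideals containing a nonzero element `x`. -/
def Vset (D : Type*) [CommRing D] (x : D) : Set (Ideal D) :=
  {P : Ideal D | P.IsMaximal ∧ x ∈ P}

/-- `𝒱(D) = {V(x) : x ∈ D, x ≠ 0}`, a semigroup under union. -/
def VV (D : Type*) [CommRing D] : Set (Set (Ideal D)) :=
  {S | ∃ x : D, x ≠ 0 ∧ S = Vset D x}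

/-- Product-coprimality in the semigroup `(𝒱(D), ∪)`. -/
def ProdCoprime (D : Type*) [CommRing D] {n : ℕ} (m : Fin n → Set (Ideal D)) : Prop :=
  ∀ (x : Set (Ideal D)) (b : Fin n → Set (Ideal D)),
    x ∈ VV D → (∀ i, b i ∈ VV D) → (∀ i, x = m i ∪ b i) →
    ∀ j, ∃ Z ∈ VV D, (⋃ i ∈ ({i | i ≠ j} : Set (Fin n)), b i) = m j ∪ Z

/-- `I ⊊ 𝒱(D)` is product-proper if no (nonempty) finite subset of `I` is product-coprime. -/
def ProductProper (D : Type*) [CommRing D] (I : Set (Set (Ideal D))) : Prop :=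
  I ⊆ VV D ∧ I ≠ VV D ∧
    ∀ (n : ℕ) (m : Fin n → Set (Ideal D)), 0 < n → Function.Injective m →
      (∀ i, m i ∈ I) → ¬ ProdCoprime D m

section Aux

variable {D : Type*} [CommRing D]

lemma Vset_one [Nontrivial D] : Vset D 1 = ∅ := by
  ext Q
  simp only [Vset, Set.mem_setOf_eq, Set.mem_empty_iff_false, iff_false, not_and]
  intro hQ h1
  exact hQ.ne_top (Ideal.eq_top_iff_one Q |>.mpr h1)

lemma empty_mem_VV [Nontrivial D] : (∅ : Set (Ideal D)) ∈ VV D :=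
  ⟨1, one_ne_zero, Vset_one.symm⟩

lemma Vset_mul (a b : D) : Vset D (a * b) = Vset D a ∪ Vset D b := by
  ext Q
  constructor
  · rintro ⟨hQ, hab⟩
    rcases hQ.isPrime.mem_or_mem hab with h | h
    · exact Or.inl ⟨hQ, h⟩
    · exact Or.inr ⟨hQ, h⟩
  · rintro (⟨hQ, h⟩ | ⟨hQ, h⟩)
    · exact ⟨hQ, Q.mul_mem_right b h⟩
    · exact ⟨hQ, Q.mul_mem_left a h⟩

/-- In a Dedekind domain, `Vset D z` is finite for `z ≠ 0`. -/
lemma Vset_finite [IsDomain D] [IsDedekindDomain D] {z : D} (hz : z ≠ 0) :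
    (Vset D z).Finite := by
  have hfin := Ideal.finite_factors (I := Ideal.span {z})
    (by simpa [Ideal.span_singleton_eq_bot] using hz)
  have : Vset D z ⊆ IsDedekindDomain.HeightOneSpectrum.asIdeal ''
      {v : IsDedekindDomain.HeightOneSpectrum D | v.asIdeal ∣ Ideal.span {z}} := by
    rintro Q ⟨hQ, hzQ⟩
    have hQbot : Q ≠ ⊥ := by
      rintro rfl
      exact hz (by simpa using hzQ)
    refine ⟨⟨Q, hQ.isPrime, hQbot⟩, ?_, rfl⟩
    simp only [Set.mem_setOf_eq, Ideal.dvd_iff_le, Ideal.span_le, Set.singleton_subset_iff]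
    exact hzQ
  exact Set.Finite.subset (hfin.image _) this

/-- The singleton family `![∅]` is product-coprime. -/
lemma prodCoprime_single_empty [Nontrivial D] :
    ProdCoprime D (fun _ : Fin 1 => (∅ : Set (Ideal D))) := by
  intro x b _ _ _ j
  refine ⟨∅, empty_mem_VV, ?_⟩
  have : ({i | i ≠ j} : Set (Fin 1)) = ∅ := by
    ext i
    simp [Subsingleton.elim i j]
  simp [this]

end Aux

/-- For a maximal ideal `P` of a Dedekind domain `D`, the set `ν(P) = {V(x) : x ∈ P, x ≠ 0}` is
a maximal product-proper subset of `𝒱(D)`. -/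
theorem nu_maximal_productProper {D : Type*} [CommRing D] [IsDomain D] [IsDedekindDomain D]
    (P : Ideal D) (hP : P.IsMaximal) :
    ProductProper D {S | ∃ x : D, x ∈ P ∧ x ≠ 0 ∧ S = Vset D x} ∧
      ∀ J : Set (Set (Ideal D)), ProductProper D J →
        {S | ∃ x : D, x ∈ P ∧ x ≠ 0 ∧ S = Vset D x} ⊆ J →
        J = {S | ∃ x : D, x ∈ P ∧ x ≠ 0 ∧ S = Vset D x} := by
  set ν : Set (Set (Ideal D)) := {S | ∃ x : D, x ∈ P ∧ x ≠ 0 ∧ S = Vset D x} with hν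
  -- the empty set is in 𝒱(D) but not in ν(P)
  have hem : (∅ : Set (Ideal D)) ∉ ν := by
    rintro ⟨x, hxP, hx0, hxe⟩
    have : P ∈ Vset D x := ⟨hP, hxP⟩
    rw [← hxe] at this
    exact this
  constructor
  · refine ⟨?_, ?_, ?_⟩
    · rintro S ⟨x, _, hx0, hS⟩
      exact ⟨x, hx0, hS⟩
    · intro h
      exact hem (h ▸ empty_mem_VV)
    · -- product-properness
      rintro n m hn hinj hmem hc
      -- choose generators
      choose xs hxsP hxs0 hxsV using hmem
      -- the finite set of maximal ideals ≠ P occurring in some m i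
      set S : Set (Ideal D) := (⋃ i, Vset D (xs i)) \ {P} with hS
      have hSfin : S.Finite :=
        ((Set.finite_iUnion (fun i => Vset_finite (hxs0 i))).diff)
      -- choice: for each Q in S, an element of Q not in P
      have hchoice : ∀ Q ∈ hSfin.toFinset, ∃ a, a ∈ Q ∧ a ∉ P := by
        intro Q hQ
        rw [Set.Finite.mem_toFinset] at hQ
        obtain ⟨hQU, hQP⟩ := hQ
        simp only [Set.mem_iUnion] at hQU
        obtain ⟨i, hQi, _⟩ := hQU
        by_contra hcon
        push_neg at hcon
        have hle : Q ≤ P := fun a ha => hcon a ha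
        exact hQP (hQi.eq_of_le hP.ne_top hle)
      classical
      set z : Ideal D → D := fun Q =>
        if h : ∃ a, a ∈ Q ∧ a ∉ P then h.choose else 1 with hzdef
      have hzQ : ∀ Q ∈ hSfin.toFinset, z Q ∈ Q ∧ z Q ∉ P := by
        intro Q hQ
        have h := hchoice Q hQ
        simp only [hzdef, dif_pos h]
        exact h.choose_spec
      set y : D := ∏ Q ∈ hSfin.toFinset, z Q with hy
      have hyP : y ∉ P := by
        refine Finset.prod_induction z (· ∉ P) ?_ ?_ ?_
        · intro a b ha hb hab
          rcases hP.isPrime.mem_or_mem hab with h | h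
          exacts [ha h, hb h]
        · intro h1
          exact hP.ne_top (Ideal.eq_top_iff_one P |>.mpr h1)
        · intro Q hQ
          exact (hzQ Q hQ).2
      have hy0 : y ≠ 0 := fun h => hyP (h ▸ P.zero_mem)
      have hySQ : ∀ Q ∈ S, y ∈ Q := by
        intro Q hQ
        have hmem' : Q ∈ hSfin.toFinset := hSfin.mem_toFinset.mpr hQ
        have hdvd : z Q ∣ y := Finset.dvd_prod_of_mem z hmem'
        obtain ⟨c, hc⟩ := hdvd
        rw [hc]
        exact Q.mul_mem_right c (hzQ Q hmem').1
      -- key: Vset (xs i) ∪ Vset y = {P} ∪ Vset y for all i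
      have hkey : ∀ i, Vset D (xs i) ∪ Vset D y = {P} ∪ Vset D y := by
        intro i
        apply Set.Subset.antisymm
        · rintro Q (⟨hQ, hxQ⟩ | hQy)
          · by_cases hQP : Q = P
            · exact Or.inl hQP
            · refine Or.inr ⟨hQ, hySQ Q ?_⟩
              exact ⟨Set.mem_iUnion.mpr ⟨i, hQ, hxQ⟩, hQP⟩
          · exact Or.inr hQy
        · rintro Q (hQ | hQy)
          · rw [Set.mem_singleton_iff] at hQ
            exact Or.inl (hQ ▸ ⟨hP, hxsP i⟩)
          · exact Or.inr hQy
      -- the refuting witness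
      have j0 : Fin n := ⟨0, hn⟩
      obtain ⟨Z, _, hZeq⟩ := hc (Vset D (xs j0 * y)) (fun _ => Vset D y)
        ⟨xs j0 * y, mul_ne_zero (hxs0 j0) hy0, rfl⟩
        (fun _ => ⟨y, hy0, rfl⟩)
        (fun i => by rw [Vset_mul, hxsV i, hkey j0, hkey i]) j0
      -- P is in the RHS but not the LHS
      have hPl : P ∉ ⋃ i ∈ ({i | i ≠ j0} : Set (Fin n)), Vset D y := by
        intro h
        simp only [Set.mem_iUnion] at h
        obtain ⟨i, _, _, hyPmem⟩ := h
        exact hyP hyPmem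
      have hPr : P ∈ m j0 ∪ Z := by
        left
        rw [hxsV j0]
        exact ⟨hP, hxsP j0⟩
      rw [hZeq] at hPl
      exact hPl hPr
  · -- maximality
    intro J hJ hsub
    apply Set.Subset.antisymm _ hsub
    intro S hS
    obtain ⟨z, hz0, hSz⟩ := hJ.1 hS
    by_contra hSnu
    have hzP : z ∉ P := by
      intro h
      exact hSnu ⟨z, h, hz0, hSz⟩
    have hPS : P ∉ S := by
      rw [hSz]
      rintro ⟨_, h⟩
      exact hzP h
    by_cases hSe : S = ∅
    · -- refute using the singleton family ![∅]
      exact hJ.2.2 1 (fun _ => (∅ : Set (Ideal D))) one_pos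
        (fun a b _ => Subsingleton.elim a b)
        (fun _ => hSe ▸ hS) prodCoprime_single_empty
    · -- S nonempty: find w ∈ P avoiding all primes of S
      obtain ⟨Q₀, hQ₀⟩ := Set.nonempty_iff_ne_empty.mpr hSe
      have hSfin : S.Finite := hSz ▸ Vset_finite hz0
      classical
      have havoid : ¬ ((P : Set D) ⊆ ⋃ Q ∈ (hSfin.toFinset : Set (Ideal D)), (Q : Set D)) := by
        rw [Ideal.subset_union_prime Q₀ Q₀ (fun Q hQ _ _ => by
          rw [Set.Finite.mem_toFinset] at hQ
          rw [hSz] at hQ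
          exact hQ.1.isPrime)]
        rintro ⟨Q, hQ, hle⟩
        rw [Set.Finite.mem_toFinset] at hQ
        have hQmax : Q.IsMaximal := by rw [hSz] at hQ; exact hQ.1
        have : P = Q := hP.eq_of_le hQmax.ne_top hle
        exact hPS (this ▸ hQ)
      obtain ⟨w, hwP, hwS⟩ := Set.not_subset.mp havoid
      simp only [Set.mem_iUnion, not_exists] at hwS
      have hwQ : ∀ Q ∈ S, w ∉ Q := by
        intro Q hQ
        exact fun h => hwS Q (hSfin.mem_toFinset.mpr hQ) h
      have hw0 : w ≠ 0 := by
        rintro rfl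
        exact hwQ Q₀ hQ₀ Q₀.zero_mem
      -- the family m = ![S, Vset w]
      set m : Fin 2 → Set (Ideal D) := ![S, Vset D w] with hm
      have hdisj : S ∩ Vset D w = ∅ := by
        ext Q
        simp only [Set.mem_inter_iff, Set.mem_empty_iff_false, iff_false, not_and]
        rintro hQS ⟨_, hwQ'⟩
        exact hwQ Q hQS hwQ'
      have hPw : P ∈ Vset D w := ⟨hP, hwP⟩
      have hne : S ≠ Vset D w := fun h => hPS (h ▸ hPw)
      have hinj : Function.Injective m := by
        intro a b hab
        fin_cases a <;> fin_cases b <;> simp_all [hm]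
      have hmemJ : ∀ i, m i ∈ J := by
        intro i
        fin_cases i
        · exact hS
        · exact hsub ⟨w, hwP, hw0, rfl⟩
      refine hJ.2.2 2 m two_pos hinj hmemJ ?_
      -- m is product-coprime
      intro X b hX hb hXe j
      -- the "other" index
      have key : ∀ (j j' : Fin 2), j ≠ j' →
          (⋃ i ∈ ({i | i ≠ j} : Set (Fin 2)), b i) = m j ∪ b j' := by
        intro j j' hjj'
        have hsub1 : m j ⊆ b j' := by
          intro Q hQ
          have hQX : Q ∈ X := (hXe j) ▸ Set.mem_union_left _ hQ
          rw [hXe j'] at hQX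
          rcases hQX with h | h
          · exfalso
            -- Q ∈ m j and Q ∈ m j' with j ≠ j': contradicts disjointness
            have hm01 : m 0 ∩ m 1 = ∅ := by
              rw [hm]
              simpa [hSz] using hdisj
            have hQ01 : Q ∈ m 0 ∩ m 1 := by
              fin_cases j <;> fin_cases j' <;>
                first
                  | exact absurd rfl hjj'
                  | exact ⟨hQ, h⟩
                  | exact ⟨h, hQ⟩
            rw [hm01] at hQ01
            exact hQ01
          · exact h
        apply Set.Subset.antisymm
        · intro Q hQ
          simp only [Set.mem_iUnion] at hQ
          obtain ⟨i, hi, hQi⟩ := hQ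
          have : i = j' := by
            fin_cases i <;> fin_cases j <;> fin_cases j' <;> simp_all
          exact Set.mem_union_right _ (this ▸ hQi)
        · rintro Q (hQ | hQ)
          · exact Set.mem_biUnion (show j' ∈ ({i | i ≠ j} : Set (Fin 2)) from hjj'.symm)
              (hsub1 hQ)
          · exact Set.mem_biUnion (show j' ∈ ({i | i ≠ j} : Set (Fin 2)) from hjj'.symm) hQ
      fin_cases j
      · exact ⟨b 1, hb 1, key 0 1 (by decide)⟩
      · exact ⟨b 0, hb 0, key 1 0 (by decide)⟩
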